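/- arXiv:1702.01000 — 4 statements merged into one kernel-verified Lean document; each statement's English description precedes it below -/
import Mathlib

section
/- Let γ_1,...,γ_m ∈ ℝ^{s} be vectors such that for every choice of signs the quantity ‖Σ_j e_j γ_j‖_2² is constrained by orthogonality: specifically, suppose w_j = r_j + u_j where r_j ∈ V, u_j ∈ V^⊥ for a subspace V, the w_j are pairwise orthogonal, ‖u_j‖_2 = 1, and γ_j is the coordinate vector of r_j in an orthonormal basis of V. Then for any signs e_j ∈ {-1,1}, ‖Σ_j e_j γ_j‖_2² ≤ m + Σ_j ‖γ_j‖_2². -/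
open RealInnerProductSpace

/-- If `w j = r j + u j` with `r j` in a subspace `V`, `u j ⊥ V`, `‖u j‖ = 1`,
the `w j` pairwise orthogonal, and `γ j` the coordinates of `r j` in an
orthonormal basis of `V`, then for any signs `e j ∈ {-1,1}`,
`‖∑ j, e j • γ j‖² ≤ m + ∑ j ‖γ j‖²`. -/
theorem stmt_1 (n m s : ℕ) (V : Submodule ℝ (EuclideanSpace ℝ (Fin n)))
    (w r u : Fin m → EuclideanSpace ℝ (Fin n))
    (b : Fin s → EuclideanSpace ℝ (Fin n))
    (hb : Orthonormal ℝ b) (hbV : ∀ k, b k ∈ V)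
    (γ : Fin m → Fin s → ℝ)
    (hw : ∀ j, w j = r j + u j)
    (hr : ∀ j, r j ∈ V) (hu : ∀ j, u j ∈ Vᗮ)
    (hunorm : ∀ j, ‖u j‖ = 1)
    (horth : ∀ j l, j ≠ l → (inner ℝ (w j) (w l) : ℝ) = 0)
    (hγ : ∀ j, r j = ∑ k, γ j k • b k)
    (e : Fin m → ℝ) (he : ∀ j, e j = 1 ∨ e j = -1) :
    ∑ k, (∑ j, e j * γ j k) ^ 2 ≤ (m : ℝ) + ∑ j, ∑ k, (γ j k) ^ 2 := by
  have hru : ∀ j l, (inner ℝ (r j) (u l) : ℝ) = 0 := fun j l =>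
    Submodule.inner_right_of_mem_orthogonal (hr j) (hu l)
  have hur : ∀ j l, (inner ℝ (u j) (r l) : ℝ) = 0 := fun j l => by
    rw [real_inner_comm]; exact hru l j
  have hwrl : ∀ j l, (inner ℝ (w j) (w l) : ℝ) = inner ℝ (r j) (r l) + inner ℝ (u j) (u l) := by
    intro j l
    rw [hw j, hw l, inner_add_left, inner_add_right, inner_add_right, hru, hur]
    ring
  have hrr : ∀ j l, (inner ℝ (r j) (r l) : ℝ) = ∑ k, γ j k * γ l k := by
    intro j l
    rw [hγ j, hγ l, sum_inner]
    refine Finset.sum_congr rfl fun k _ => ?_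
    rw [real_inner_smul_left, hb.inner_right_fintype]
  have huu : ∀ j, (inner ℝ (u j) (u j) : ℝ) = 1 := fun j => by
    rw [real_inner_self_eq_norm_sq, hunorm j]; norm_num
  have he2 : ∀ j, e j * e j = 1 := fun j => by rcases he j with h | h <;> rw [h] <;> norm_num
  -- B := expansion of ‖∑ e j • u j‖² is nonneg
  have hB : (0:ℝ) ≤ ∑ j, ∑ l, e j * e l * inner ℝ (u j) (u l) := by
    have h0 : (0:ℝ) ≤ inner ℝ (∑ j, e j • u j) (∑ l, e l • u l) := real_inner_self_nonneg
    have hexp : (inner ℝ (∑ j, e j • u j) (∑ l, e l • u l) : ℝ)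
        = ∑ j, ∑ l, e j * e l * inner ℝ (u j) (u l) := by
      rw [sum_inner]
      refine Finset.sum_congr rfl fun j _ => ?_
      rw [inner_sum]
      refine Finset.sum_congr rfl fun l _ => ?_
      rw [real_inner_smul_left, real_inner_smul_right]; ring
    linarith [hexp ▸ h0]
  -- LHS = ∑ j ∑ l e j e l ⟨r j, r l⟩
  have hA : ∑ k, (∑ j, e j * γ j k) ^ 2 = ∑ j, ∑ l, e j * e l * (inner ℝ (r j) (r l) : ℝ) := by
    have h1 : ∀ k, (∑ j, e j * γ j k) ^ 2 = ∑ j, ∑ l, (e j * γ j k) * (e l * γ l k) := fun k => by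
      rw [sq, Finset.sum_mul_sum]
    simp_rw [h1, hrr, Finset.mul_sum]
    rw [Finset.sum_comm]
    refine Finset.sum_congr rfl fun j _ => ?_
    rw [Finset.sum_comm]
    exact Finset.sum_congr rfl fun l _ => Finset.sum_congr rfl fun k _ => by ring
  -- w-expansion: ∑ j ∑ l e j e l ⟨w j, w l⟩ = m + ∑ j ∑ k γ j k ^2
  have hW : ∑ j, ∑ l, e j * e l * (inner ℝ (w j) (w l) : ℝ)
      = (m : ℝ) + ∑ j, ∑ k, (γ j k) ^ 2 := by
    have hdiag : ∀ j : Fin m, ∑ l, e j * e l * (inner ℝ (w j) (w l) : ℝ)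
        = 1 + ∑ k, (γ j k) ^ 2 := by
      intro j
      rw [Finset.sum_eq_single j]
      · rw [hwrl, hrr, huu]
        have : ∑ k, γ j k * γ j k = ∑ k, (γ j k) ^ 2 :=
          Finset.sum_congr rfl fun k _ => (sq (γ j k)).symm
        rw [this]
        rw [show e j * e j * (∑ k, (γ j k) ^ 2 + 1) = (e j * e j) * (∑ k, (γ j k) ^ 2 + 1) by ring,
          he2]
        ring
      · intro l _ hl
        rw [horth j l (Ne.symm hl)]; ring
      · intro h; exact absurd (Finset.mem_univ j) h
    rw [Finset.sum_congr rfl fun j _ => hdiag j, Finset.sum_add_distrib]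
    simp
  have hsplit : ∑ j, ∑ l, e j * e l * (inner ℝ (w j) (w l) : ℝ)
      = (∑ j, ∑ l, e j * e l * (inner ℝ (r j) (r l) : ℝ))
        + ∑ j, ∑ l, e j * e l * (inner ℝ (u j) (u l) : ℝ) := by
    rw [← Finset.sum_add_distrib]
    refine Finset.sum_congr rfl fun j _ => ?_
    rw [← Finset.sum_add_distrib]
    refine Finset.sum_congr rfl fun l _ => ?_
    rw [hwrl]; ring
  rw [hA]
  linarith [hsplit ▸ hW]
end

section
/- If B ∈ ℝ^{s×s} is symmetric with diagonal entries equal to 1 and B + c I is positive semidefinite for some c ≥ 1, then B can be written as B = E'F where the columns of E and F each have Euclidean norm at most 1 + c + √c. -/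
open Matrix

/-!
Let `D` be the symmetric square root of `B + c • 1` and put `E = D + √c • 1`,
`F = D - √c • 1`; then `Eᵀ * F = D * D - c • 1 = B`. The squared norm of the `j`-th column
of `D` is `(Dᵀ * D) j j = B j j + c = 1 + c`, so by the triangle inequality the `j`-th columns
of `E` and `F` have norm at most `√(1 + c) + √c ≤ 1 + c + √c`.
-/

theorem Real.sqrt_sum_sq_add_le {ι : Type*} [Fintype ι] (u v : ι → ℝ) :
    √(∑ i, (u i + v i) ^ 2) ≤ √(∑ i, u i ^ 2) + √(∑ i, v i ^ 2) := by
  have h (w : ι → ℝ) : √(∑ i, w i ^ 2) = ‖WithLp.toLp 2 w‖ := by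
    simp [EuclideanSpace.norm_eq]
  simpa only [← WithLp.toLp_add, ← h, Pi.add_apply] using
    norm_add_le (WithLp.toLp 2 u) (WithLp.toLp 2 v)

namespace Matrix

theorem sum_sq_apply_eq_transpose_mul_self_apply {m n R : Type*} [Fintype n] [CommSemiring R]
    (M : Matrix n m R) (j : m) : ∑ i, M i j ^ 2 = (Mᵀ * M) j j := by
  simp only [mul_apply, transpose_apply, sq]

variable {n : Type*} [Fintype n] [DecidableEq n]

theorem sqrt_sum_sq_add_smul_one_apply_le (D : Matrix n n ℝ) (b : ℝ) (j : n) :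
    √(∑ i, (D + b • 1) i j ^ 2) ≤ √(∑ i, D i j ^ 2) + |b| := by
  have hb : √(∑ i, (b • (1 : Matrix n n ℝ)) i j ^ 2) = |b| := by
    simp [one_apply, ← Real.sqrt_sq_eq_abs]
  simpa only [add_apply, hb] using
    Real.sqrt_sum_sq_add_le (fun i ↦ D i j) (fun i ↦ (b • (1 : Matrix n n ℝ)) i j)

theorem transpose_add_smul_one_mul_sub_smul_one {R : Type*} [CommRing R] {D : Matrix n n R}
    (hD : D.IsSymm) (a : R) : (D + a • 1)ᵀ * (D - a • 1) = D * D - (a * a) • 1 := by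
  simp only [transpose_add, hD.eq, transpose_smul, transpose_one, add_mul, mul_sub, Matrix.smul_mul,
    Matrix.mul_smul, Matrix.one_mul, Matrix.mul_one, smul_smul]
  abel

theorem PosSemidef.exists_isSymm_mul_self_eq {A : Matrix n n ℝ} (hA : A.PosSemidef) :
    ∃ D : Matrix n n ℝ, D.IsSymm ∧ D * D = A := by
  open scoped MatrixOrder in
  exact ⟨CFC.sqrt A, (CFC.sqrt_nonneg A).posSemidef.isHermitian,
    CFC.sqrt_mul_sqrt_self A hA.nonneg⟩

end Matrix

theorem stmt_3_general (s : ℕ) (B : Matrix (Fin s) (Fin s) ℝ) (c : ℝ)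
    (hc : 1 ≤ c) (hdiag : ∀ k, B k k = 1)
    (hpsd : (B + c • (1 : Matrix (Fin s) (Fin s) ℝ)).PosSemidef) :
    ∃ E F : Matrix (Fin s) (Fin s) ℝ, B = Eᵀ * F ∧
      (∀ j, Real.sqrt (∑ i, (E i j) ^ 2) ≤ 1 + c + Real.sqrt c) ∧
      (∀ j, Real.sqrt (∑ i, (F i j) ^ 2) ≤ 1 + c + Real.sqrt c) := by
  obtain ⟨D, hDsymm, hDD⟩ := hpsd.exists_isSymm_mul_self_eq
  have hcol (j : Fin s) : ∑ i, D i j ^ 2 = 1 + c := by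
    rw [sum_sq_apply_eq_transpose_mul_self_apply, hDsymm.eq, hDD]
    simp [hdiag]
  have hsqrt : √(1 + c) ≤ 1 + c := Real.sqrt_le_self_iff.mpr (.inr (by linarith))
  have hbound (b : ℝ) (hb : |b| = √c) (j : Fin s) :
      √(∑ i, (D + b • 1) i j ^ 2) ≤ 1 + c + √c := by
    have := sqrt_sum_sq_add_smul_one_apply_le D b j
    rw [hcol, hb] at this
    linarith
  refine ⟨D + √c • 1, D - √c • 1, ?_, hbound _ (abs_of_nonneg (Real.sqrt_nonneg c)), ?_⟩
  · rw [transpose_add_smul_one_mul_sub_smul_one hDsymm, hDD,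
      Real.mul_self_sqrt (by linarith), add_sub_cancel_right]
  · simpa only [sub_eq_add_neg, ← neg_smul] using
      hbound _ (by rw [abs_neg, abs_of_nonneg (Real.sqrt_nonneg c)])

/-- If `B` is a symmetric `s×s` real matrix with unit diagonal and `B + c • I` is
positive semidefinite for some `c ≥ 1`, then `B = Eᵀ * F` where every column of `E`
and of `F` has Euclidean norm at most `1 + c + √c`. -/
theorem stmt_3 (s : ℕ) (B : Matrix (Fin s) (Fin s) ℝ) (c : ℝ)
    (hc : 1 ≤ c) (hsym : B.IsSymm) (hdiag : ∀ k, B k k = 1)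
    (hpsd : (B + c • (1 : Matrix (Fin s) (Fin s) ℝ)).PosSemidef) :
    ∃ E F : Matrix (Fin s) (Fin s) ℝ, B = Eᵀ * F ∧
      (∀ j, Real.sqrt (∑ i, (E i j) ^ 2) ≤ 1 + c + Real.sqrt c) ∧
      (∀ j, Real.sqrt (∑ i, (F i j) ^ 2) ≤ 1 + c + Real.sqrt c) :=
  stmt_3_general s B c hc hdiag hpsd
end

section
/- Forward regression prediction bound (Theorem 1, first part): under Algorithm 1 with threshold t, the forward regression estimator θ̂ satisfies E_n[(x_i'θ_0 - x_i'θ̂)²]^{1/2} ≤ √(ŝ + s_0) · φ_min(ŝ+s_0)(G_x)^{-1} · (2‖E_n[ε_i x_i']‖_∞ + t^{1/2}), where ŝ = |Ŝ| is the number of selected covariates. -/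
/-!
Let `δ = θ₀ - θ̂`; it is supported in `Ŝ ∪ supp θ₀`, hence `(ŝ + s₀)`-sparse. Since `θ̂` minimizes
the loss on `Ŝ` and forward regression stopped there, moving `θ̂` along any single covariate `j`
by `a = E_n[x_j (y - x'θ̂)]` lowers the loss by `a²` (the covariates are normalized), so `a² ≤ t`.
As `y - x'θ̂ = x'δ + ε`, this gives `|E_n[x_j x'δ]| ≤ B := √t + ‖E_n[ε x]‖_∞` for every `j`. Finally
`E_n[(x'δ)²] = Σⱼ δⱼ E_n[x_j x'δ] ≤ ‖δ‖₁ B ≤ √(ŝ+s₀) ‖δ‖₂ B`, while the sparse eigenvalue gives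
`φ ‖δ‖₂² ≤ E_n[(x'δ)²]`. Together they bound `‖δ‖₂` by `√(ŝ+s₀) B / φ` and then `E_n[(x'δ)²]` by
`φ (√(ŝ+s₀) B / φ)²`; the normalization makes `G_jj = 1`, so `φ ≤ 1` absorbs the leftover `φ`.
-/

/-- Minimal empirical squared loss over coefficient vectors supported in `S`. -/
noncomputable def loss {n p : ℕ} (x : Fin n → Fin p → ℝ) (y : Fin n → ℝ)
    (S : Finset (Fin p)) : ℝ :=
  sInf {r : ℝ | ∃ θ : Fin p → ℝ, (∀ j ∉ S, θ j = 0) ∧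
    r = (1 / (n : ℝ)) * ∑ i, (y i - ∑ j, x i j * θ j) ^ 2}

/-- Minimum `s`-sparse eigenvalue of `G` (Rayleigh quotient form). -/
noncomputable def phiMin {p : ℕ} (G : Matrix (Fin p) (Fin p) ℝ) (s : ℕ) : ℝ :=
  sInf {r : ℝ | ∃ v : Fin p → ℝ, (∑ i, v i ^ 2) = 1 ∧
    (Finset.univ.filter (fun i => v i ≠ 0)).card ≤ s ∧
    r = ∑ i, ∑ j, v i * G i j * v j}

/-- `Shat` is a possible output of Algorithm 1 (forward regression with
threshold `t`): starting from the empty set, repeatedly add a covariate `j`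
maximizing the loss decrease `-Δ_jℓ(S) = ℓ(S) - ℓ(S ∪ {j})` provided this
maximal decrease exceeds `t`; stop when no decrease exceeds `t`. -/
def IsForwardRegression {n p : ℕ} (x : Fin n → Fin p → ℝ) (y : Fin n → ℝ)
    (t : ℝ) (Shat : Finset (Fin p)) : Prop :=
  ∃ (k : ℕ) (F : ℕ → Finset (Fin p)),
    F 0 = ∅ ∧ F k = Shat ∧
    (∀ i < k, ∃ j ∉ F i,
      loss x y (F i) - loss x y (insert j (F i)) > t ∧
      (∀ j', loss x y (F i) - loss x y (insert j' (F i)) ≤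
        loss x y (F i) - loss x y (insert j (F i))) ∧
      F (i + 1) = insert j (F i)) ∧
    (∀ j ∉ Shat, loss x y Shat - loss x y (insert j Shat) ≤ t)

open Finset

lemma sum_abs_le_sqrt_card_mul_sqrt_sum_sq {ι : Type*} [Fintype ι] {s : ℕ} {v : ι → ℝ}
    (hv : #{j | v j ≠ 0} ≤ s) : ∑ j, |v j| ≤ √s * √(∑ j, v j ^ 2) := by
  have hsupp : ∑ j ∈ {j | v j ≠ 0}, |v j| = ∑ j, |v j| :=
    sum_filter_of_ne fun j _ hj => abs_ne_zero.1 hj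
  have hsq : ∑ j ∈ {j | v j ≠ 0}, |v j| ^ 2 ≤ ∑ j, v j ^ 2 := by
    simp_rw [sq_abs]
    exact sum_le_sum_of_subset_of_nonneg (subset_univ _) fun j _ _ => sq_nonneg (v j)
  rw [← Real.sqrt_mul (Nat.cast_nonneg s), Real.le_sqrt (sum_nonneg fun j _ => abs_nonneg _)
    (by positivity), ← hsupp]
  calc (∑ j ∈ {j | v j ≠ 0}, |v j|) ^ 2
      ≤ #{j | v j ≠ 0} * ∑ j ∈ {j | v j ≠ 0}, |v j| ^ 2 := sq_sum_le_card_mul_sum_sq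
    _ ≤ s * ∑ j, v j ^ 2 := by gcongr

lemma card_support_sub_le {ι M : Type*} [Fintype ι] [DecidableEq ι] [AddGroup M]
    [DecidableEq M] {S : Finset ι} {θ₀ θ : ι → M} (hθ : ∀ j ∉ S, θ j = 0) :
    #{j | (θ₀ - θ) j ≠ 0} ≤ #S + #{j | θ₀ j ≠ 0} := by
  refine (card_le_card fun j hj => ?_).trans (card_union_le _ _)
  by_cases hjS : j ∈ S
  · exact mem_union_left _ hjS
  · simp_all

section EmpiricalRisk

variable {n p : ℕ} (x : Fin n → Fin p → ℝ)

noncomputable def risk (y : Fin n → ℝ) (θ : Fin p → ℝ) : ℝ :=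
  (1 / (n : ℝ)) * ∑ i, (y i - ∑ j, x i j * θ j) ^ 2

noncomputable def empCov (r : Fin n → ℝ) (j : Fin p) : ℝ :=
  (1 / (n : ℝ)) * ∑ i, x i j * r i

variable {x}

lemma loss_le_risk {y : Fin n → ℝ} {S : Finset (Fin p)} {θ : Fin p → ℝ}
    (hθ : ∀ j ∉ S, θ j = 0) : loss x y S ≤ risk x y θ :=
  csInf_le ⟨0, by rintro r ⟨θ', -, rfl⟩; positivity⟩ ⟨θ, hθ, rfl⟩

lemma risk_add_single (y : Fin n → ℝ) (θ : Fin p → ℝ) (j : Fin p) (c : ℝ) :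
    risk x y (θ + Pi.single j c) = risk x y θ
      - 2 * c * empCov x (fun i => y i - ∑ k, x i k * θ k) j
      + c ^ 2 * ((1 / (n : ℝ)) * ∑ i, x i j ^ 2) := by
  have hfit : ∀ i, ∑ k, x i k * (θ + Pi.single j c : Fin p → ℝ) k
      = ∑ k, x i k * θ k + x i j * c := by
    intro i
    simp [mul_add, sum_add_distrib, Pi.single_apply]
  simp only [risk, empCov, hfit, mul_sum, ← sum_sub_distrib, ← sum_add_distrib]
  exact sum_congr rfl fun i _ => by ring

/-- With `E_n[x_j²] = 1`, the step `θ + a eⱼ` with `a = E_n[x_j r]` lowers the risk by `a²`. -/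
lemma sq_empCov_residual_le {y : Fin n → ℝ} {S : Finset (Fin p)} {θ : Fin p → ℝ}
    (hθ : ∀ k ∉ S, θ k = 0) {j : Fin p} (hj : (1 / (n : ℝ)) * ∑ i, x i j ^ 2 = 1) :
    empCov x (fun i => y i - ∑ k, x i k * θ k) j ^ 2 ≤ risk x y θ - loss x y (insert j S) := by
  set a := empCov x (fun i => y i - ∑ k, x i k * θ k) j
  have hsupp : ∀ k ∉ insert j S, (θ + Pi.single j a : Fin p → ℝ) k = 0 := by
    intro k hk
    rw [mem_insert, not_or] at hk
    simp [hθ k hk.2, hk.1]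
  have hdescent : loss x y (insert j S) ≤ risk x y (θ + Pi.single j a) := loss_le_risk hsupp
  rw [risk_add_single, hj] at hdescent
  linarith

lemma IsForwardRegression.loss_sub_loss_insert_le {y : Fin n → ℝ} {t : ℝ}
    {Shat : Finset (Fin p)} (hFR : IsForwardRegression x y t Shat) (ht : 0 ≤ t) (j : Fin p) :
    loss x y Shat - loss x y (insert j Shat) ≤ t := by
  obtain ⟨-, -, -, -, -, hstop⟩ := hFR
  by_cases hj : j ∈ Shat
  · rwa [insert_eq_of_mem hj, sub_self]
  · exact hstop j hj

lemma IsForwardRegression.abs_empCov_residual_le {y : Fin n → ℝ} {t : ℝ}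
    {Shat : Finset (Fin p)} (hFR : IsForwardRegression x y t Shat) (ht : 0 ≤ t)
    (hnormal : ∀ j, (1 / (n : ℝ)) * ∑ i, x i j ^ 2 = 1)
    {θhat : Fin p → ℝ} (hsupp : ∀ j ∉ Shat, θhat j = 0) (hmin : risk x y θhat = loss x y Shat)
    (j : Fin p) :
    |empCov x (fun i => y i - ∑ k, x i k * θhat k) j| ≤ √t := by
  refine Real.abs_le_sqrt ((sq_empCov_residual_le hsupp (hnormal j)).trans ?_)
  rw [hmin]
  exact hFR.loss_sub_loss_insert_le ht j

lemma empCov_residual_eq {y ε : Fin n → ℝ} {θ₀ : Fin p → ℝ}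
    (hmodel : ∀ i, y i = (∑ j, x i j * θ₀ j) + ε i) (θ : Fin p → ℝ) (j : Fin p) :
    empCov x (fun i => y i - ∑ k, x i k * θ k) j
      = empCov x (fun i => ∑ k, x i k * (θ₀ - θ) k) j + (1 / (n : ℝ)) * ∑ i, ε i * x i j := by
  have hres : ∀ i, y i - ∑ k, x i k * θ k = ∑ k, x i k * (θ₀ - θ) k + ε i := fun i => by
    simp only [hmodel, Pi.sub_apply, mul_sub, sum_sub_distrib]
    ring
  simp only [empCov, hres, mul_add, sum_add_distrib, mul_comm (ε _)]

end EmpiricalRisk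

section SparseEigenvalue

variable {p : ℕ} {G : Matrix (Fin p) (Fin p) ℝ}

variable (hG : ∀ v : Fin p → ℝ, 0 ≤ ∑ i, ∑ j, v i * G i j * v j) {s : ℕ}
include hG

lemma phiMin_le {v : Fin p → ℝ} (hunit : ∑ j, v j ^ 2 = 1) (hv : #{j | v j ≠ 0} ≤ s) :
    phiMin G s ≤ ∑ i, ∑ j, v i * G i j * v j :=
  csInf_le ⟨0, by rintro r ⟨w, -, -, rfl⟩; exact hG w⟩ ⟨v, hunit, hv, rfl⟩

lemma phiMin_mul_sum_sq_le {v : Fin p → ℝ} (hv : #{j | v j ≠ 0} ≤ s) :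
    phiMin G s * ∑ j, v j ^ 2 ≤ ∑ i, ∑ j, v i * G i j * v j := by
  rcases (sum_nonneg fun j _ => sq_nonneg (v j) : 0 ≤ ∑ j, v j ^ 2).eq_or_lt with h0 | hpos
  · rw [← h0, mul_zero]
    exact hG v
  set c := √(∑ j, v j ^ 2)
  have hc2 : c ^ 2 = ∑ j, v j ^ 2 := Real.sq_sqrt hpos.le
  have hunit : ∑ j, (v j / c) ^ 2 = 1 := by
    simp_rw [div_pow, ← sum_div, hc2]
    exact div_self hpos.ne'
  have hsupp : #{j | v j / c ≠ 0} ≤ s := by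
    refine le_trans (card_le_card fun j hj => ?_) hv
    simp only [mem_filter, mem_univ, true_and] at hj ⊢
    exact left_ne_zero_of_mul hj
  have hscale : ∑ i, ∑ j, v i / c * G i j * (v j / c)
      = (∑ i, ∑ j, v i * G i j * v j) / ∑ j, v j ^ 2 := by
    simp_rw [← hc2, sum_div]
    exact sum_congr rfl fun i _ => sum_congr rfl fun j _ => by ring
  have := phiMin_le hG hunit hsupp
  rwa [hscale, le_div_iff₀ hpos] at this

lemma exists_phiMin_le_diag (hφ : 0 < phiMin G s) : ∃ j, phiMin G s ≤ G j j := by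
  obtain ⟨-, v, hunit, hv, -⟩ : {r : ℝ | ∃ v : Fin p → ℝ, (∑ i, v i ^ 2) = 1 ∧
      (Finset.univ.filter (fun i => v i ≠ 0)).card ≤ s ∧
      r = ∑ i, ∑ j, v i * G i j * v j}.Nonempty := by
    by_contra hempty
    rw [Set.not_nonempty_iff_eq_empty] at hempty
    exact hφ.ne' (by rw [phiMin, hempty, Real.sInf_empty])
  obtain ⟨j, hj⟩ : ∃ j, v j ≠ 0 := by
    by_contra! h
    simp [h] at hunit
  have hs : 1 ≤ s := le_trans (card_pos.2 ⟨j, by simpa using hj⟩) hv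
  set e : Fin p → ℝ := Pi.single j 1
  have he : #{k | e k ≠ 0} = 1 := card_eq_one.2 ⟨j, by ext k; simp [e, Pi.single_apply]⟩
  refine ⟨j, ?_⟩
  calc phiMin G s ≤ ∑ a, ∑ b, e a * G a b * e b :=
        phiMin_le hG (by simp [e, Pi.single_apply]) (he.trans_le hs)
    _ = G j j := by simp [e, Pi.single_apply]

end SparseEigenvalue

section Gram

variable {n p : ℕ} {x : Fin n → Fin p → ℝ} {G : Matrix (Fin p) (Fin p) ℝ}
  (hG : ∀ j k, G j k = (1 / (n : ℝ)) * ∑ i, x i j * x i k)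
include hG

lemma quadForm_gram (v : Fin p → ℝ) :
    ∑ j, ∑ k, v j * G j k * v k = (1 / (n : ℝ)) * ∑ i, (∑ j, x i j * v j) ^ 2 := by
  simp only [hG, sq, mul_sum, sum_mul]
  conv_lhs => enter [2, j]; rw [sum_comm]
  rw [sum_comm]
  exact sum_congr rfl fun i _ => sum_congr rfl fun j _ => sum_congr rfl fun k _ => by ring

lemma quadForm_gram_nonneg (v : Fin p → ℝ) : 0 ≤ ∑ i, ∑ j, v i * G i j * v j := by
  rw [quadForm_gram hG]
  positivity

lemma phiMin_le_one_of_pos (hnormal : ∀ j, (1 / (n : ℝ)) * ∑ i, x i j ^ 2 = 1) {s : ℕ}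
    (hφ : 0 < phiMin G s) : phiMin G s ≤ 1 := by
  obtain ⟨j, hj⟩ := exists_phiMin_le_diag (quadForm_gram_nonneg hG) hφ
  have hdiag : G j j = 1 := by simpa only [hG, sq] using hnormal j
  exact hj.trans_eq hdiag

end Gram

section PredictionBound

variable {n p : ℕ} {x : Fin n → Fin p → ℝ}

lemma meanSq_eq_sum_mul_empCov (v : Fin p → ℝ) :
    (1 / (n : ℝ)) * ∑ i, (∑ j, x i j * v j) ^ 2
      = ∑ j, v j * empCov x (fun i => ∑ k, x i k * v k) j := by
  simp only [empCov, sq, mul_sum, sum_mul]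
  rw [sum_comm]
  exact sum_congr rfl fun j _ => sum_congr rfl fun i _ => sum_congr rfl fun k _ => by ring

lemma sqrt_meanSq_le_of_abs_empCov_le {s : ℕ} {v : Fin p → ℝ} (hv : #{j | v j ≠ 0} ≤ s)
    {φ B : ℝ} (hφ : 0 < φ) (hφ1 : φ ≤ 1) (hB : 0 ≤ B)
    (heig : φ * ∑ j, v j ^ 2 ≤ (1 / (n : ℝ)) * ∑ i, (∑ j, x i j * v j) ^ 2)
    (hcov : ∀ j, |empCov x (fun i => ∑ k, x i k * v k) j| ≤ B) :
    √((1 / (n : ℝ)) * ∑ i, (∑ j, x i j * v j) ^ 2) ≤ √s * φ⁻¹ * B := by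
  set Q := (1 / (n : ℝ)) * ∑ i, (∑ j, x i j * v j) ^ 2
  set L := √(∑ j, v j ^ 2)
  set u := √s * φ⁻¹ * B
  have hL : L ^ 2 = ∑ j, v j ^ 2 := Real.sq_sqrt (sum_nonneg fun j _ => sq_nonneg (v j))
  have hu : 0 ≤ u := by positivity
  have hupper : Q ≤ φ * u * L :=
    calc Q = ∑ j, v j * empCov x (fun i => ∑ k, x i k * v k) j := meanSq_eq_sum_mul_empCov v
      _ ≤ ∑ j, |v j| * B := sum_le_sum fun j _ =>
          (le_abs_self _).trans (by rw [abs_mul]; gcongr; exact hcov j)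
      _ = (∑ j, |v j|) * B := (sum_mul _ _ _).symm
      _ ≤ √s * L * B := by gcongr; exact sum_abs_le_sqrt_card_mul_sqrt_sum_sq hv
      _ = φ * u * L := by simp only [u]; field_simp
  have hL0 : 0 ≤ L := Real.sqrt_nonneg _
  have hLu : L ≤ u := by
    rw [← hL] at heig
    by_contra! h
    nlinarith [mul_pos hφ (mul_pos (sub_pos.2 h) (hu.trans_lt h))]
  rw [Real.sqrt_le_iff]
  refine ⟨hu, ?_⟩
  nlinarith [mul_nonneg (mul_nonneg (sub_nonneg.2 hφ1) hu) hL0, mul_nonneg hu (sub_nonneg.2 hLu)]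

end PredictionBound

theorem stmt_14_general (n p : ℕ) (x : Fin n → Fin p → ℝ) (y ε : Fin n → ℝ)
    (θ₀ : Fin p → ℝ) (t : ℝ) (ht : 0 < t)
    (hmodel : ∀ i, y i = (∑ j, x i j * θ₀ j) + ε i)
    (hnormal : ∀ j, (1 / (n : ℝ)) * ∑ i, x i j ^ 2 = 1)
    (G : Matrix (Fin p) (Fin p) ℝ)
    (hG : ∀ j k, G j k = (1 / (n : ℝ)) * ∑ i, x i j * x i k)
    (s₀ : ℕ) (hs₀ : s₀ = (Finset.univ.filter (fun j => θ₀ j ≠ 0)).card)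
    (Shat : Finset (Fin p)) (hFR : IsForwardRegression x y t Shat)
    (shat : ℕ) (hshat : shat = Shat.card)
    (θhat : Fin p → ℝ) (hθhatsupp : ∀ j ∉ Shat, θhat j = 0)
    (hθhatmin : (1 / (n : ℝ)) * ∑ i, (y i - ∑ j, x i j * θhat j) ^ 2 = loss x y Shat)
    (hφ : 0 < phiMin G (shat + s₀)) :
    Real.sqrt ((1 / (n : ℝ)) * ∑ i, ((∑ j, x i j * θ₀ j) - ∑ j, x i j * θhat j) ^ 2) ≤
      Real.sqrt ((shat : ℝ) + s₀) * (phiMin G (shat + s₀))⁻¹ *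
        (2 * (⨆ j : Fin p, |(1 / (n : ℝ)) * ∑ i, ε i * x i j|) + Real.sqrt t) := by
  set δ := θ₀ - θhat
  set M := ⨆ j : Fin p, |(1 / (n : ℝ)) * ∑ i, ε i * x i j|
  have hsparse : #{j | δ j ≠ 0} ≤ shat + s₀ := hshat ▸ hs₀ ▸ card_support_sub_le hθhatsupp
  have hcov : ∀ j, |empCov x (fun i => ∑ k, x i k * δ k) j| ≤ 2 * M + √t := by
    intro j
    have hres := hFR.abs_empCov_residual_le ht.le hnormal hθhatsupp hθhatmin j
    rw [empCov_residual_eq hmodel] at hres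
    have hM : |(1 / (n : ℝ)) * ∑ i, ε i * x i j| ≤ M :=
      le_ciSup (f := fun j => |(1 / (n : ℝ)) * ∑ i, ε i * x i j|) (Set.finite_range _).bddAbove j
    obtain ⟨hres₁, hres₂⟩ := abs_le.1 hres
    obtain ⟨hM₁, hM₂⟩ := abs_le.1 hM
    exact abs_le.2 ⟨by linarith, by linarith⟩
  have heig := phiMin_mul_sum_sq_le (quadForm_gram_nonneg hG) hsparse
  rw [quadForm_gram hG] at heig
  have hfit : ∀ i, (∑ j, x i j * θ₀ j) - ∑ j, x i j * θhat j = ∑ j, x i j * δ j := fun i => by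
    simp only [δ, Pi.sub_apply, mul_sub, sum_sub_distrib]
  have hM0 : 0 ≤ M := Real.iSup_nonneg fun j => abs_nonneg _
  simp only [hfit]
  exact_mod_cast sqrt_meanSq_le_of_abs_empCov_le hsparse hφ
    (phiMin_le_one_of_pos hG hnormal hφ) (by positivity) heig hcov

/-- Forward regression prediction bound (Theorem 1, first part): on data
`yᵢ = xᵢ'θ₀ + εᵢ` with normalized covariates, the post-forward-regression
least-squares estimator `θ̂` satisfies
`E_n[(xᵢ'θ₀ - xᵢ'θ̂)²]^{1/2} ≤ √(ŝ+s₀) φ_min(ŝ+s₀)(G_x)⁻¹ (2‖E_n[εx]‖_∞ + √t)`. -/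
theorem stmt_14 (n p : ℕ) (x : Fin n → Fin p → ℝ) (y ε : Fin n → ℝ)
    (θ₀ : Fin p → ℝ) (t : ℝ) (ht : 0 < t)
    (hmodel : ∀ i, y i = (∑ j, x i j * θ₀ j) + ε i)
    (hcenter : ∀ j, (1 / (n : ℝ)) * ∑ i, x i j = 0)
    (hnormal : ∀ j, (1 / (n : ℝ)) * ∑ i, x i j ^ 2 = 1)
    (G : Matrix (Fin p) (Fin p) ℝ)
    (hG : ∀ j k, G j k = (1 / (n : ℝ)) * ∑ i, x i j * x i k)
    (s₀ : ℕ) (hs₀ : s₀ = (Finset.univ.filter (fun j => θ₀ j ≠ 0)).card)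
    (Shat : Finset (Fin p)) (hFR : IsForwardRegression x y t Shat)
    (shat : ℕ) (hshat : shat = Shat.card)
    (θhat : Fin p → ℝ) (hθhatsupp : ∀ j ∉ Shat, θhat j = 0)
    (hθhatmin : (1 / (n : ℝ)) * ∑ i, (y i - ∑ j, x i j * θhat j) ^ 2 = loss x y Shat)
    (hφ : 0 < phiMin G (shat + s₀)) :
    Real.sqrt ((1 / (n : ℝ)) * ∑ i, ((∑ j, x i j * θ₀ j) - ∑ j, x i j * θhat j) ^ 2) ≤
      Real.sqrt ((shat : ℝ) + s₀) * (phiMin G (shat + s₀))⁻¹ *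
        (2 * (⨆ j : Fin p, |(1 / (n : ℝ)) * ∑ i, ε i * x i j|) + Real.sqrt t) :=
  stmt_14_general n p x y ε θ₀ t ht hmodel hnormal G hG s₀ hs₀ Shat hFR shat hshat θhat hθhatsupp
    hθhatmin hφ
end

section
/- Bound on false selections of the second kind (Section 6): let H = [v_1,...,v_{s_0}, w_1,...,w_m] ∈ ℝ^{n×(m+s_0)} with λ_min((1/n)H'H) ≥ φ > 0, and let w̃_j be the pairwise-orthogonal residualized versions with ‖w̃_j‖² ≤ φ^{-1}. If m_2 of the indices j satisfy |γ̃_{jε̃}| > t^{1/2}n^{1/2}/(2ε'M ε)^{1/2} where γ̃_{jε̃} = ε̃'w̃_j and ε̃ = Mε/(ε'Mε)^{1/2} for a projection M, and if t^{1/2} ≥ 2‖E_n[x_iε_i]‖_∞ φ^{-1}, then m_2 ≤ (m+s_0)/2. -/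
open scoped RealInnerProductSpace

lemma proj_exists (n s₀ : ℕ) (v : Fin s₀ → Fin n → ℝ) (h : Fin n → ℝ) :
    ∃ c : Fin s₀ → ℝ,
      (∀ i, ∑ k, (h k - ∑ i', c i' * v i' k) * v i k = 0) ∧
      ∑ k, (h k - ∑ i', c i' * v i' k) ^ 2 ≤ ∑ k, h k ^ 2 := by
  classical
  let E := EuclideanSpace ℝ (Fin n)
  let v' : Fin s₀ → E := fun i => WithLp.toLp 2 (v i)
  let h' : E := WithLp.toLp 2 h
  let V : Submodule ℝ E := Submodule.span ℝ (Set.range v')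
  set q : E := (V.orthogonalProjectionOnto h' : E) with hqdef
  have hqV : q ∈ V := (V.orthogonalProjectionOnto h').2
  obtain ⟨c, hc⟩ := (Submodule.mem_span_range_iff_exists_fun ℝ).mp hqV
  have hqk : ∀ k, q k = ∑ i', c i' * v i' k := by
    intro k
    rw [← hc]
    change (∑ x, c x • WithLp.toLp 2 (v x) : WithLp 2 (Fin n → ℝ)).ofLp k = _
    rw [WithLp.ofLp_sum, Finset.sum_apply]
    simp
  have hg : ∀ k, (h' - q) k = h k - ∑ i', c i' * v i' k := by
    intro k; rw [PiLp.sub_apply, hqk k]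
  have horth : h' - q ∈ Vᗮ := Submodule.sub_starProjection_mem_orthogonal (K := V) h'
  refine ⟨c, ?_, ?_⟩
  · intro i
    have hvV : v' i ∈ V := Submodule.subset_span (Set.mem_range_self i)
    have h0 := horth (v' i) hvV
    have hinner : ⟪v' i, h' - q⟫ = ∑ k, (h k - ∑ i', c i' * v i' k) * v i k := by
      rw [PiLp.inner_apply]
      refine Finset.sum_congr rfl fun k _ => ?_
      rw [hg k]; simp [v', mul_comm]
    rw [hinner] at h0
    exact h0
  · have hsum : ∀ (a : E), ∑ k, (a k) ^ 2 = ‖a‖ ^ 2 := by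
      intro a
      rw [← real_inner_self_eq_norm_sq, PiLp.inner_apply]
      refine Finset.sum_congr rfl fun k _ => ?_
      simp [sq]
    have h1 : ∑ k, (h k - ∑ i', c i' * v i' k) ^ 2 = ‖h' - q‖ ^ 2 := by
      rw [← hsum]
      exact Finset.sum_congr rfl fun k _ => by rw [hg k]
    have h2 : ∑ k, h k ^ 2 = ‖h'‖ ^ 2 := hsum h'
    rw [h1, h2]
    have hinner0 : ⟪q, h' - q⟫ = 0 := horth q hqV
    have hpyth : ‖h'‖ ^ 2 = ‖q‖ ^ 2 + 2 * ⟪q, h' - q⟫ + ‖h' - q‖ ^ 2 := by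
      rw [← norm_add_sq_real, add_sub_cancel]
    rw [hinner0] at hpyth
    nlinarith [sq_nonneg ‖q‖]

lemma spanB {n N : ℕ} (H : Fin N → Fin n → ℝ) (ε : Fin n → ℝ) (C φ : ℝ)
    (hφ : 0 < φ) (hn : 0 < n) (hC : 0 ≤ C)
    (hcol : ∀ i, |∑ k, ε k * H i k| ≤ C)
    (hlam : ∀ u : Fin N → ℝ,
      φ * ∑ i, u i ^ 2 ≤ (1 / (n : ℝ)) * ∑ k, (∑ i, u i * H i k) ^ 2)
    (g : Fin n → ℝ) (hg : g ∈ Submodule.span ℝ (Set.range H)) :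
    |∑ k, ε k * g k| ≤ C * Real.sqrt ((N : ℝ) * ((∑ k, g k ^ 2) / ((n : ℝ) * φ))) := by
  classical
  obtain ⟨a, ha⟩ := (Submodule.mem_span_range_iff_exists_fun ℝ).mp hg
  have hak : ∀ k, g k = ∑ i, a i * H i k := by
    intro k
    rw [← ha, Finset.sum_apply]
    simp
  have hswap : ∑ k, ε k * g k = ∑ i, a i * ∑ k, ε k * H i k := by
    simp_rw [hak, Finset.mul_sum]
    rw [Finset.sum_comm]
    refine Finset.sum_congr rfl fun i _ => ?_
    exact Finset.sum_congr rfl fun k _ => by ring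
  have habs : |∑ k, ε k * g k| ≤ C * ∑ i, |a i| := by
    rw [hswap, Finset.mul_sum]
    refine le_trans (Finset.abs_sum_le_sum_abs _ _) (Finset.sum_le_sum fun i _ => ?_)
    rw [abs_mul, mul_comm]
    exact mul_le_mul (hcol i) le_rfl (abs_nonneg _) hC
  have hcs : ∑ i, |a i| ≤ Real.sqrt ((N : ℝ) * ∑ i, (a i) ^ 2) := by
    have h1 : (∑ i, |a i|) ^ 2 ≤ (N : ℝ) * ∑ i, (a i) ^ 2 := by
      have := sq_sum_le_card_mul_sum_sq (s := (Finset.univ : Finset (Fin N))) (f := fun i => |a i|)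
      simpa [sq_abs] using this
    have h2 : ∑ i, |a i| = Real.sqrt ((∑ i, |a i|) ^ 2) := by
      rw [Real.sqrt_sq (Finset.sum_nonneg fun i _ => abs_nonneg _)]
    rw [h2]
    exact Real.sqrt_le_sqrt h1
  have hacoef : ∑ i, (a i) ^ 2 ≤ (∑ k, g k ^ 2) / ((n : ℝ) * φ) := by
    have hl := hlam a
    have hgs : ∑ k, (∑ i, a i * H i k) ^ 2 = ∑ k, g k ^ 2 := by
      refine Finset.sum_congr rfl fun k _ => by rw [hak]
    rw [hgs] at hl
    rw [le_div_iff₀ (by positivity)]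
    have hn' : (0:ℝ) < n := by exact_mod_cast hn
    calc (∑ i, (a i) ^ 2) * ((n:ℝ) * φ) = (n:ℝ) * (φ * ∑ i, (a i)^2) := by ring
    _ ≤ (n:ℝ) * ((1/(n:ℝ)) * ∑ k, g k ^ 2) := by
        exact mul_le_mul_of_nonneg_left hl (le_of_lt hn')
    _ = ∑ k, g k ^ 2 := by field_simp
  calc |∑ k, ε k * g k| ≤ C * ∑ i, |a i| := habs
  _ ≤ C * Real.sqrt ((N : ℝ) * ∑ i, (a i) ^ 2) := by
      exact mul_le_mul_of_nonneg_left hcs hC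
  _ ≤ C * Real.sqrt ((N : ℝ) * ((∑ k, g k ^ 2) / ((n : ℝ) * φ))) := by
      refine mul_le_mul_of_nonneg_left (Real.sqrt_le_sqrt ?_) hC
      exact mul_le_mul_of_nonneg_left hacoef (Nat.cast_nonneg N)

set_option maxHeartbeats 2000000 in
/-- Bound on false selections of the second kind (Section 6).  Let
`H = [v₁,...,v_{s₀}, w₁,...,w_m]` have columns among the covariate columns
`x j`, with `λ_min((1/n)H'H) ≥ φ > 0`; let `w̃ j` be pairwise-orthogonal
residualized versions lying in `span(H)` with `‖w̃ j‖² ≤ φ⁻¹`; let `Mε` be the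
projection of `ε` orthogonal to `span{v₁,...,v_{s₀}}` and
`ε̃ = Mε / (ε'Mε)^{1/2}`.  If `√t ≥ 2‖E_n[xᵢεᵢ]‖_∞ φ⁻¹`, then the number `m₂`
of indices `j` with `|ε̃'w̃ j| > √(tn)/√(2 ε'Mε)` satisfies `m₂ ≤ (m+s₀)/2`. -/
theorem stmt_17 (n p s₀ m : ℕ) (x : Fin p → Fin n → ℝ) (ε : Fin n → ℝ)
    (v : Fin s₀ → Fin n → ℝ) (w : Fin m → Fin n → ℝ)
    (wt : Fin m → Fin n → ℝ) (Mε : Fin n → ℝ) (t φ : ℝ)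
    (hφpos : 0 < φ)
    (hHx : ∀ i : Fin (s₀ + m), ∃ j : Fin p, Fin.append v w i = x j)
    (hlam : ∀ u : Fin (s₀ + m) → ℝ,
      φ * ∑ i, u i ^ 2 ≤ (1 / (n : ℝ)) * ∑ k, (∑ i, u i * Fin.append v w i k) ^ 2)
    (hwtspan : ∀ j, wt j ∈ Submodule.span ℝ (Set.range (Fin.append v w)))
    (hwtorth : ∀ j l, j ≠ l → ∑ k, wt j k * wt l k = 0)
    (hwtnorm : ∀ j, ∑ k, wt j k ^ 2 ≤ φ⁻¹)
    (hMproj : ε - Mε ∈ Submodule.span ℝ (Set.range v))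
    (hMorth : ∀ i : Fin s₀, ∑ k, Mε k * v i k = 0)
    (hMne : Mε ≠ 0)
    (ht : Real.sqrt t ≥ 2 * (⨆ j : Fin p, |(1 / (n : ℝ)) * ∑ k, x j k * ε k|) * φ⁻¹)
    (m₂ : ℕ)
    (hm₂ : m₂ = (Finset.univ.filter (fun j : Fin m =>
      |∑ k, (Mε k / Real.sqrt (∑ k', Mε k' ^ 2)) * wt j k| >
        Real.sqrt (t * n) / Real.sqrt (2 * ∑ k, Mε k ^ 2))).card) :
    (m₂ : ℝ) ≤ ((m : ℝ) + s₀) / 2 := by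
  classical
  set Λ : ℝ := ⨆ j : Fin p, |(1 / (n : ℝ)) * ∑ k, x j k * ε k| with hΛdef
  set S : Finset (Fin m) := Finset.univ.filter (fun j : Fin m =>
      |∑ k, (Mε k / Real.sqrt (∑ k', Mε k' ^ 2)) * wt j k| >
        Real.sqrt (t * n) / Real.sqrt (2 * ∑ k, Mε k ^ 2)) with hSdef
  rcases S.eq_empty_or_nonempty with hSe | hSne
  · rw [hm₂, hSe]
    simp
    positivity
  -- basic positivity facts
  obtain ⟨j₀, hj₀⟩ := hSne
  have hn : 0 < n := by
    rcases Nat.eq_zero_or_pos n with h0 | h0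
    · subst h0
      exact absurd (funext fun k => k.elim0) hMne
    · exact h0
  have hp : 0 < p := by
    obtain ⟨j, -⟩ := hHx (Fin.natAdd s₀ j₀)
    exact j.pos
  have hn' : (0:ℝ) < n := by exact_mod_cast hn
  have hβ2 : 0 < ∑ k, Mε k ^ 2 := by
    obtain ⟨k0, hk0⟩ := Function.ne_iff.mp hMne
    have hk0' : Mε k0 ≠ 0 := by simpa using hk0
    exact Finset.sum_pos' (fun k _ => sq_nonneg _)
      ⟨k0, Finset.mem_univ k0, pow_pos (abs_pos.mpr hk0') 2 |>.trans_eq (by rw [sq_abs])⟩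
  have hbdd : BddAbove (Set.range fun j : Fin p => |(1 / (n : ℝ)) * ∑ k, x j k * ε k|) :=
    Set.Finite.bddAbove (Set.finite_range _)
  have hΛle : ∀ j : Fin p, |(1 / (n : ℝ)) * ∑ k, x j k * ε k| ≤ Λ := by
    intro j
    rw [hΛdef]
    exact le_ciSup hbdd j
  have hΛnn : 0 ≤ Λ := le_trans (abs_nonneg _) (hΛle ⟨0, hp⟩)
  have hcol : ∀ i : Fin (s₀ + m), |∑ k, ε k * Fin.append v w i k| ≤ (n:ℝ) * Λ := by
    intro i
    obtain ⟨j, hj⟩ := hHx i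
    rw [hj]
    have h1 : |(1 / (n : ℝ)) * ∑ k, x j k * ε k| ≤ Λ := hΛle j
    have h2 : ∑ k, ε k * x j k = ∑ k, x j k * ε k :=
      Finset.sum_congr rfl fun k _ => mul_comm _ _
    rw [h2]
    rw [abs_mul, abs_of_pos (by positivity : (0:ℝ) < 1/(n:ℝ))] at h1
    calc |∑ k, x j k * ε k| = (n:ℝ) * ((1/(n:ℝ)) * |∑ k, x j k * ε k|) := by field_simp
    _ ≤ (n:ℝ) * Λ := by
        exact mul_le_mul_of_nonneg_left h1 (le_of_lt hn')
  -- threshold for selected indices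
  set c : Fin m → ℝ := fun j => ∑ k, Mε k * wt j k with hcdef
  have hthr : ∀ j ∈ S, Real.sqrt (t * n) / Real.sqrt 2 < |c j| := by
    intro j hj
    rw [hSdef, Finset.mem_filter] at hj
    have hj2 := hj.2
    have hfac : ∑ k, (Mε k / Real.sqrt (∑ k', Mε k' ^ 2)) * wt j k
        = c j / Real.sqrt (∑ k', Mε k' ^ 2) := by
      rw [hcdef, Finset.sum_div]
      exact Finset.sum_congr rfl fun k _ => by ring
    have hsβ : 0 < Real.sqrt (∑ k', Mε k' ^ 2) := Real.sqrt_pos.mpr hβ2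
    have e1 : |∑ k, (Mε k / Real.sqrt (∑ k', Mε k' ^ 2)) * wt j k|
        = |c j| / Real.sqrt (∑ k', Mε k' ^ 2) := by
      rw [hfac, abs_div, abs_of_pos hsβ]
    have h2β : Real.sqrt (2 * ∑ k, Mε k ^ 2)
        = Real.sqrt 2 * Real.sqrt (∑ k', Mε k' ^ 2) := Real.sqrt_mul (by norm_num) _
    rw [gt_iff_lt, e1, h2β] at hj2
    have h2βpos : 0 < Real.sqrt 2 * Real.sqrt (∑ k', Mε k' ^ 2) := by positivity
    rw [div_lt_div_iff₀ h2βpos hsβ] at hj2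
    have h2p : (0:ℝ) < Real.sqrt 2 := by positivity
    rw [div_lt_iff₀ h2p]
    nlinarith [hj2, hsβ]

  -- Q and h
  set Q : ℝ := ∑ j ∈ S, (c j) ^ 2 with hQdef
  have htn0 : 0 ≤ Real.sqrt (t * n) / Real.sqrt 2 := by positivity
  have hQpos : 0 < Q := by
    refine Finset.sum_pos' (fun j _ => sq_nonneg _) ⟨j₀, hj₀, ?_⟩
    have h1 := hthr j₀ hj₀
    have h2 : 0 < |c j₀| := lt_of_le_of_lt htn0 h1
    exact (sq_abs (c j₀)) ▸ pow_pos h2 2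
  have hcj : ∀ j, c j = ∑ k, Mε k * wt j k := fun j => by rw [hcdef]
  have hMh : ∑ k, Mε k * (∑ j ∈ S, c j * wt j k) = Q := by
    calc ∑ k, Mε k * ∑ j ∈ S, c j * wt j k
        = ∑ k, ∑ j ∈ S, c j * (Mε k * wt j k) := by
          refine Finset.sum_congr rfl fun k _ => ?_
          rw [Finset.mul_sum]
          exact Finset.sum_congr rfl fun j _ => by ring
      _ = ∑ j ∈ S, c j * ∑ k, Mε k * wt j k := by
          rw [Finset.sum_comm]
          exact Finset.sum_congr rfl fun j _ => (Finset.mul_sum _ _ _).symm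
      _ = Q := by
          rw [hQdef]
          exact Finset.sum_congr rfl fun j _ => by rw [← hcj j, sq]
  have hhnorm : ∑ k, (∑ j ∈ S, c j * wt j k) ^ 2 ≤ φ⁻¹ * Q := by
    have hexp : ∑ k, (∑ j ∈ S, c j * wt j k) ^ 2
        = ∑ j ∈ S, c j ^ 2 * ∑ k, wt j k ^ 2 := by
      calc ∑ k, (∑ j ∈ S, c j * wt j k) ^ 2
          = ∑ k, ∑ j ∈ S, ∑ l ∈ S, (c j * wt j k) * (c l * wt l k) := by
            refine Finset.sum_congr rfl fun k _ => ?_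
            rw [sq, Finset.sum_mul_sum]
        _ = ∑ j ∈ S, ∑ l ∈ S, (c j * c l) * ∑ k, wt j k * wt l k := by
            rw [Finset.sum_comm]
            refine Finset.sum_congr rfl fun j _ => ?_
            rw [Finset.sum_comm]
            refine Finset.sum_congr rfl fun l _ => ?_
            rw [Finset.mul_sum]
            exact Finset.sum_congr rfl fun k _ => by ring
        _ = ∑ j ∈ S, c j ^ 2 * ∑ k, wt j k ^ 2 := by
            refine Finset.sum_congr rfl fun j hj => ?_
            rw [Finset.sum_eq_single_of_mem j hj]
            · rw [sq]
              congr 1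
              exact Finset.sum_congr rfl fun k _ => (sq (wt j k)).symm
            · intro l hl hne
              rw [hwtorth j l (fun h => hne (h ▸ rfl)), mul_zero]
    rw [hexp, hQdef, Finset.mul_sum]
    refine Finset.sum_le_sum fun j _ => ?_
    rw [mul_comm (φ⁻¹)]
    exact mul_le_mul_of_nonneg_left (hwtnorm j) (sq_nonneg _)
  -- projection
  obtain ⟨d, hdorth, hdnorm⟩ := proj_exists n s₀ v (fun k => ∑ j ∈ S, c j * wt j k)
  set g : Fin n → ℝ := fun k => (∑ j ∈ S, c j * wt j k) - ∑ i', d i' * v i' k with hgdef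
  have hgk : ∀ k, g k = (∑ j ∈ S, c j * wt j k) - ∑ i', d i' * v i' k := fun k => by
    rw [hgdef]
  have hswapv : ∀ (u : Fin n → ℝ) (e : Fin s₀ → ℝ),
      ∑ k, u k * (∑ i', e i' * v i' k) = ∑ i', e i' * ∑ k, u k * v i' k := by
    intro u e
    calc ∑ k, u k * ∑ i', e i' * v i' k
        = ∑ k, ∑ i', e i' * (u k * v i' k) := by
          refine Finset.sum_congr rfl fun k _ => ?_
          rw [Finset.mul_sum]
          exact Finset.sum_congr rfl fun i _ => by ring
      _ = ∑ i', e i' * ∑ k, u k * v i' k := by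
          rw [Finset.sum_comm]
          exact Finset.sum_congr rfl fun i _ => (Finset.mul_sum _ _ _).symm
  have hMg : ∑ k, Mε k * g k = Q := by
    have step : ∑ k, Mε k * g k
        = ∑ k, Mε k * (∑ j ∈ S, c j * wt j k) - ∑ k, Mε k * (∑ i', d i' * v i' k) := by
      rw [← Finset.sum_sub_distrib]
      exact Finset.sum_congr rfl fun k _ => by rw [hgk]; ring
    rw [step, hMh, hswapv Mε d]
    simp [hMorth]
  have hgorth : ∀ i, ∑ k, g k * v i k = 0 := by
    intro i
    have := hdorth i
    simpa [← hgk] using this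
  have hεg : ∑ k, ε k * g k = Q := by
    obtain ⟨e, he⟩ := (Submodule.mem_span_range_iff_exists_fun ℝ).mp hMproj
    have hek : ∀ k, ε k - Mε k = ∑ i, e i * v i k := by
      intro k
      have h0 := congrFun he k
      simpa using h0.symm
    have hsub : ∑ k, (ε k - Mε k) * g k = 0 := by
      calc ∑ k, (ε k - Mε k) * g k = ∑ k, g k * (∑ i, e i * v i k) := by
            refine Finset.sum_congr rfl fun k _ => by rw [hek]; ring
        _ = ∑ i, e i * ∑ k, g k * v i k := hswapv g e
        _ = 0 := by simp [hgorth]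
    have hsplit : ∑ k, ε k * g k = ∑ k, (ε k - Mε k) * g k + ∑ k, Mε k * g k := by
      rw [← Finset.sum_add_distrib]
      exact Finset.sum_congr rfl fun k _ => by ring
    rw [hsplit, hsub, hMg, zero_add]
  have hgspan : g ∈ Submodule.span ℝ (Set.range (Fin.append v w)) := by
    have hgsub : g = (∑ j ∈ S, c j • wt j) - (∑ i', d i' • v i') := by
      funext k
      rw [hgk]
      simp [Finset.sum_apply]
    rw [hgsub]
    refine Submodule.sub_mem _ ?_ ?_
    · exact Submodule.sum_mem _ fun j _ => Submodule.smul_mem _ _ (hwtspan j)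
    · refine Submodule.sum_mem _ fun i _ => Submodule.smul_mem _ _ ?_
      exact Submodule.subset_span ⟨Fin.castAdd m i, Fin.append_left v w i⟩
  -- upper bound on Q
  have hεabs := spanB (Fin.append v w) ε ((n:ℝ) * Λ) φ hφpos hn (by positivity) hcol hlam g hgspan
  have hgnorm : ∑ k, g k ^ 2 ≤ φ⁻¹ * Q := le_trans hdnorm hhnorm
  set A : ℝ := ((s₀ + m : ℕ) : ℝ) * ((φ⁻¹ * Q) / ((n : ℝ) * φ)) with hAdef
  have hA0 : (0:ℝ) ≤ A := by
    rw [hAdef]; positivity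
  have hchain : Q ≤ (n:ℝ) * Λ * Real.sqrt A := by
    calc Q = |∑ k, ε k * g k| := by rw [hεg, abs_of_pos hQpos]
      _ ≤ (n:ℝ) * Λ * Real.sqrt (((s₀ + m : ℕ) : ℝ) * ((∑ k, g k ^ 2) / ((n:ℝ) * φ))) := hεabs
      _ ≤ (n:ℝ) * Λ * Real.sqrt A := by
          refine mul_le_mul_of_nonneg_left (Real.sqrt_le_sqrt ?_) (by positivity)
          rw [hAdef]
          gcongr
  have hΛpos : 0 < Λ := by
    rcases hΛnn.lt_or_eq with hl | hl
    · exact hl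
    · exfalso
      rw [← hl, mul_zero, zero_mul] at hchain
      linarith
  have htpos : 0 < t := by
    have h1 : (0:ℝ) < 2 * Λ * φ⁻¹ := by positivity
    exact Real.sqrt_pos.mp (lt_of_lt_of_le h1 ht)
  have hΛle2 : Λ ≤ Real.sqrt t * φ / 2 := by
    have ht' : 2 * Λ * φ⁻¹ ≤ Real.sqrt t := ht
    have hφne : φ ≠ 0 := ne_of_gt hφpos
    have h2 := mul_le_mul_of_nonneg_right ht' (le_of_lt hφpos)
    rw [mul_assoc, inv_mul_cancel₀ hφne, mul_one] at h2
    nlinarith [h2]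
  have hchain2 : Q ≤ (n:ℝ) * (Real.sqrt t * φ / 2) * Real.sqrt A :=
    le_trans hchain (mul_le_mul_of_nonneg_right
      (mul_le_mul_of_nonneg_left hΛle2 (le_of_lt hn')) (Real.sqrt_nonneg A))
  have hQle : Q ≤ t * ((s₀ + m : ℕ) : ℝ) * (n:ℝ) / 4 := by
    have hsq := mul_self_le_mul_self (le_of_lt hQpos) hchain2
    have hAs : Real.sqrt A * Real.sqrt A = A := Real.mul_self_sqrt hA0
    have hts : Real.sqrt t * Real.sqrt t = t := Real.mul_self_sqrt (le_of_lt htpos)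
    have hkey : ((n:ℝ) * (Real.sqrt t * φ / 2) * Real.sqrt A)
        * ((n:ℝ) * (Real.sqrt t * φ / 2) * Real.sqrt A)
        = (t * ((s₀ + m : ℕ) : ℝ) * (n:ℝ) / 4) * Q := by
      calc ((n:ℝ) * (Real.sqrt t * φ / 2) * Real.sqrt A)
          * ((n:ℝ) * (Real.sqrt t * φ / 2) * Real.sqrt A)
          = ((n:ℝ) * (n:ℝ)) * ((Real.sqrt t * Real.sqrt t) * (φ * φ) / 4)
            * (Real.sqrt A * Real.sqrt A) := by ring
        _ = ((n:ℝ) * (n:ℝ)) * (t * (φ * φ) / 4) * A := by rw [hts, hAs]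
        _ = (t * ((s₀ + m : ℕ) : ℝ) * (n:ℝ) / 4) * Q := by
            rw [hAdef]
            field_simp
    rw [hkey] at hsq
    exact le_of_mul_le_mul_right hsq hQpos
  -- lower bound on Q
  have hlow : (S.card : ℝ) * (t * (n:ℝ) / 2) < Q := by
    have hterm : ∀ j ∈ S, t * (n:ℝ) / 2 < c j ^ 2 := by
      intro j hj
      have h1 := hthr j hj
      have htn : (0:ℝ) ≤ t * n := by positivity
      rw [← Real.sqrt_div htn] at h1
      have h3 := Real.sq_sqrt (show (0:ℝ) ≤ t * (n:ℝ) / 2 by positivity)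
      nlinarith [h1, Real.sqrt_nonneg (t * (n:ℝ) / 2), sq_abs (c j)]
    calc (S.card : ℝ) * (t * (n:ℝ) / 2) = ∑ _j ∈ S, (t * (n:ℝ) / 2) := by
          rw [Finset.sum_const, nsmul_eq_mul]
      _ < ∑ j ∈ S, c j ^ 2 := Finset.sum_lt_sum_of_nonempty ⟨j₀, hj₀⟩ hterm
      _ = Q := hQdef.symm
  -- conclude
  have htn2 : (0:ℝ) < t * (n:ℝ) / 2 := by positivity
  have hNn : ((s₀ + m : ℕ) : ℝ) = (s₀ : ℝ) + m := by push_cast; ring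
  have hfin : (S.card : ℝ) < ((s₀ : ℝ) + m) / 2 := by
    have h3 : (S.card : ℝ) * (t * (n:ℝ) / 2) < (((s₀:ℝ) + m) / 2) * (t * (n:ℝ) / 2) := by
      calc (S.card : ℝ) * (t * (n:ℝ) / 2) < Q := hlow
        _ ≤ t * ((s₀ + m : ℕ) : ℝ) * (n:ℝ) / 4 := hQle
        _ = (((s₀:ℝ) + m) / 2) * (t * (n:ℝ) / 2) := by rw [hNn]; ring
    exact lt_of_mul_lt_mul_right h3 (le_of_lt htn2)
  rw [hm₂]
  linarith
end
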